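/- Classical communication is necessary: under the protocol data below with M = 1 (no classical communication, i.e. a single index η), the protocol cannot correct the channel faithfully and deterministically; that is, the hypothesis Σ_{k,l∈Fin P} Λ_{k,l} R (Λ_{k,l})† = Ψ₀ for a positive-definite Choi state R leads to a contradiction (False). -/

import Mathlib

open Matrix Kronecker ComplexOrder

/-!
`Ψ₀` vanishes at the diagonal entries `((a, b), (a, b))` with `a ≠ b`, and each summand
`Λ k l * R * (Λ k l)ᴴ` is positive semidefinite with `R` positive definite, so the rows `(a, b)`,
`a ≠ b`, of every `Λ k l` vanish. Unitarity of `A` gives `∑ l, Λ k l * (Λ k l)ᴴ = C k ⊗ₖ 1` with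
`C k = ∑ i, μ i ^ 2 • (B k i * (B k i)ᴴ)`, whose entry at `((a, b), (a, b))` is `C k a a` whatever `b`
is; choosing `b ≠ a` shows `tr (C k) = 0`. Unitarity of `B` however gives
`∑ k, tr (C k) = N * ∑ i, μ i ^ 2 = N`.
-/

namespace Matrix

section PosDef

variable {m n ι R : Type*} [Fintype n] [CommRing R] [StarRing R]

theorem mul_mul_conjTranspose_apply_self (M : Matrix m n R) (A : Matrix n n R) (p : m) :
    (M * A * Mᴴ) p p = star (star (M p)) ⬝ᵥ A *ᵥ star (M p) := by
  simp only [mul_apply, conjTranspose_apply, dotProduct, mulVec, star_star, Finset.sum_mul,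
    Finset.mul_sum, Pi.star_apply, mul_assoc]
  exact Finset.sum_comm

variable [PartialOrder R] {A : Matrix n n R}

theorem PosDef.eq_zero_of_mul_mul_conjTranspose_apply_self_eq_zero (hA : A.PosDef)
    {M : Matrix m n R} {p : m} (h : (M * A * Mᴴ) p p = 0) : M p = 0 := by
  by_contra hp
  have hp' : star (M p) ≠ 0 := by rwa [Ne, star_eq_zero]
  exact (hA.dotProduct_mulVec_pos hp').ne' (by rw [← mul_mul_conjTranspose_apply_self, h])

theorem PosDef.eq_zero_of_sum_mul_mul_conjTranspose_apply_self_eq_zero [Fintype ι]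
    [IsOrderedAddMonoid R] (hA : A.PosDef) {M : ι → Matrix m n R} {p : m}
    (h : (∑ j, M j * A * (M j)ᴴ) p p = 0) (j : ι) : M j p = 0 := by
  refine hA.eq_zero_of_mul_mul_conjTranspose_apply_self_eq_zero ?_
  have hnonneg (j : ι) : 0 ≤ (M j * A * (M j)ᴴ) p p := by
    rw [mul_mul_conjTranspose_apply_self]
    exact hA.posSemidef.dotProduct_mulVec_nonneg _
  rw [sum_apply] at h
  exact (Finset.sum_eq_zero_iff_of_nonneg fun j _ => hnonneg j).mp h j (Finset.mem_univ j)

end PosDef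

section Kronecker

variable {ι κ m m' n n' 𝕜 : Type*} [Fintype κ] [CommRing 𝕜]

theorem kronecker_sum (X : Matrix m m' 𝕜) (Y : κ → Matrix n n' 𝕜) :
    X ⊗ₖ (∑ l, Y l) = ∑ l, X ⊗ₖ Y l := by
  ext ⟨a, b⟩ ⟨a', b'⟩
  simp [sum_apply, Finset.mul_sum]

theorem sum_kronecker (X : κ → Matrix m m' 𝕜) (Y : Matrix n n' 𝕜) :
    (∑ l, X l) ⊗ₖ Y = ∑ l, X l ⊗ₖ Y := by
  ext ⟨a, b⟩ ⟨a', b'⟩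
  simp [sum_apply, Finset.sum_mul]

variable [StarRing 𝕜]

theorem sum_trace_mul_conjTranspose_eq_card [Fintype m] [Fintype n] [DecidableEq n]
    {B : κ → Matrix m n 𝕜} (hB : ∑ k, (B k)ᴴ * B k = 1) :
    ∑ k, (B k * (B k)ᴴ).trace = Fintype.card n := by
  simp_rw [trace_mul_comm (B _), ← trace_sum, hB, trace_one]

theorem sum_transpose_mul_conjTranspose_transpose [DecidableEq ι] [Fintype n] [DecidableEq n']
    {A : κ → ι → Matrix n n' 𝕜}
    (hA : ∀ i j, ∑ l, (A l i)ᴴ * A l j = if i = j then 1 else 0) (i j : ι) :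
    ∑ l, (A l i)ᵀ * ((A l j)ᵀ)ᴴ = if j = i then 1 else 0 := by
  simp_rw [conjTranspose_transpose_eq_transpose_conjTranspose, ← transpose_mul, ← transpose_sum,
    hA, apply_ite transpose, transpose_one, transpose_zero]

theorem sum_mul_conjTranspose_of_kronecker_transpose [Fintype ι] [DecidableEq ι] [Fintype m']
    [Fintype n] [DecidableEq n'] (c : ι → 𝕜) (B : ι → Matrix m m' 𝕜)
    {A : κ → ι → Matrix n n' 𝕜}
    (hA : ∀ i j, ∑ l, (A l i)ᴴ * A l j = if i = j then 1 else 0) :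
    ∑ l, (∑ i, c i • (B i ⊗ₖ (A l i)ᵀ)) * (∑ i, c i • (B i ⊗ₖ (A l i)ᵀ))ᴴ
      = (∑ i, (c i * star (c i)) • (B i * (B i)ᴴ)) ⊗ₖ (1 : Matrix n' n' 𝕜) := by
  calc _ = ∑ i, ∑ j, (c i * star (c j)) •
        ((B i * (B j)ᴴ) ⊗ₖ ∑ l, (A l i)ᵀ * ((A l j)ᵀ)ᴴ) := by
        simp_rw [conjTranspose_sum, Matrix.sum_mul, Matrix.mul_sum, conjTranspose_smul,
          Matrix.smul_mul, Matrix.mul_smul, smul_smul, conjTranspose_kronecker,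
          ← mul_kronecker_mul, kronecker_sum, Finset.smul_sum]
        rw [Finset.sum_comm]
        exact Finset.sum_congr rfl fun i _ => Finset.sum_comm
    _ = _ := by
        simp [sum_transpose_mul_conjTranspose_transpose hA, apply_ite (kroneckerMap (· * ·) _),
          sum_kronecker, smul_kronecker]

end Kronecker

end Matrix

theorem classical_communication_necessary_general
    (N P : ℕ) (hN : 2 ≤ N)
    (μ : Fin P → ℝ) (hμsum : ∑ i, μ i ^ 2 = 1)
    (A B : Fin P → Fin P → Matrix (Fin N) (Fin N) ℂ)
    (hA2 : ∀ i j : Fin P, ∑ k : Fin P, (A k i)ᴴ * A k j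
        = if i = j then (1 : Matrix (Fin N) (Fin N) ℂ) else 0)
    (hB2 : ∀ i j : Fin P, ∑ k : Fin P, (B k i)ᴴ * B k j
        = if i = j then (1 : Matrix (Fin N) (Fin N) ℂ) else 0)
    (Λ : Fin P → Fin P → Matrix (Fin N × Fin N) (Fin N × Fin N) ℂ)
    (hΛ : ∀ k l, Λ k l = ∑ i : Fin P, ((μ i : ℂ)) • (B k i ⊗ₖ (A l i)ᵀ))
    (ψ₀ : Fin N × Fin N → ℂ)
    (hψ₀ : ∀ q : Fin N × Fin N, ψ₀ q = if q.1 = q.2 then (1 / (Real.sqrt N : ℂ)) else 0)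
    (Ψ₀ : Matrix (Fin N × Fin N) (Fin N × Fin N) ℂ)
    (hΨ₀ : ∀ q q' : Fin N × Fin N, Ψ₀ q q' = ψ₀ q * (starRingEnd ℂ) (ψ₀ q'))
    (R : Matrix (Fin N × Fin N) (Fin N × Fin N) ℂ)
    (hR : R.PosDef)
    (hcorr : ∑ k : Fin P, ∑ l : Fin P, Λ k l * R * (Λ k l)ᴴ = Ψ₀) :
    False := by
  have : Nontrivial (Fin N) := Fin.nontrivial_iff_two_le.mpr hN
  set C : Fin P → Matrix (Fin N) (Fin N) ℂ :=
    fun k => ∑ i, ((μ i : ℂ) * star (μ i : ℂ)) • (B k i * (B k i)ᴴ)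
  have hΛΛ (k : Fin P) : ∑ l, Λ k l * (Λ k l)ᴴ = C k ⊗ₖ 1 := by
    simp only [hΛ]
    exact sum_mul_conjTranspose_of_kronecker_transpose _ _ hA2
  have hrow (k l : Fin P) {a b : Fin N} (hab : a ≠ b) : Λ k l (a, b) = 0 := by
    refine hR.eq_zero_of_sum_mul_mul_conjTranspose_apply_self_eq_zero
      (M := fun kl : Fin P × Fin P => Λ kl.1 kl.2) ?_ (k, l)
    rw [Fintype.sum_prod_type, hcorr, hΨ₀, hψ₀]
    simp [hab]
  have hC (k : Fin P) : (C k).trace = 0 := Finset.sum_eq_zero fun a _ => by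
    obtain ⟨b, hba⟩ := exists_ne a
    simpa [hrow k _ hba.symm, Matrix.sum_apply, mul_apply] using
      (congrFun₂ (hΛΛ k) (a, b) (a, b)).symm
  have htrace : ∑ k, (C k).trace = N :=
    calc ∑ k, (C k).trace
        = ∑ i, ((μ i : ℂ) * star (μ i : ℂ)) * ∑ k, (B k i * (B k i)ᴴ).trace := by
          simp_rw [C, trace_sum, trace_smul, smul_eq_mul, Finset.mul_sum]
          exact Finset.sum_comm
      _ = ∑ i, ((μ i ^ 2 : ℝ) : ℂ) * N := by
          refine Finset.sum_congr rfl fun i _ => ?_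
          rw [sum_trace_mul_conjTranspose_eq_card (by simpa using hB2 i i)]
          simp [sq]
      _ = N := by rw [← Finset.sum_mul, ← Complex.ofReal_sum, hμsum]; simp
  simp only [hC, Finset.sum_const_zero] at htrace
  exact Nat.cast_ne_zero.mpr (by omega) htrace.symm

/-- Classical communication is necessary: a protocol with a single measurement
outcome (`M = 1`, the index `η` suppressed) cannot deterministically and faithfully
correct a noisy channel whose Choi state `R` is positive definite (maximal rank). -/
theorem classical_communication_necessary
    (N P : ℕ) (hN : 2 ≤ N) (hP : 1 ≤ P)
    (μ : Fin P → ℝ) (hμ : ∀ i, 0 ≤ μ i) (hμsum : ∑ i, μ i ^ 2 = 1)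
    (A B : Fin P → Fin P → Matrix (Fin N) (Fin N) ℂ)
    (hA1 : ∀ i j : Fin P, ∑ k : Fin P, A i k * (A j k)ᴴ
        = if i = j then (1 : Matrix (Fin N) (Fin N) ℂ) else 0)
    (hA2 : ∀ i j : Fin P, ∑ k : Fin P, (A k i)ᴴ * A k j
        = if i = j then (1 : Matrix (Fin N) (Fin N) ℂ) else 0)
    (hB1 : ∀ i j : Fin P, ∑ k : Fin P, B i k * (B j k)ᴴ
        = if i = j then (1 : Matrix (Fin N) (Fin N) ℂ) else 0)
    (hB2 : ∀ i j : Fin P, ∑ k : Fin P, (B k i)ᴴ * B k j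
        = if i = j then (1 : Matrix (Fin N) (Fin N) ℂ) else 0)
    (Λ : Fin P → Fin P → Matrix (Fin N × Fin N) (Fin N × Fin N) ℂ)
    (hΛ : ∀ k l, Λ k l = ∑ i : Fin P, ((μ i : ℂ)) • (B k i ⊗ₖ (A l i)ᵀ))
    (ψ₀ : Fin N × Fin N → ℂ)
    (hψ₀ : ∀ q : Fin N × Fin N, ψ₀ q = if q.1 = q.2 then (1 / (Real.sqrt N : ℂ)) else 0)
    (Ψ₀ : Matrix (Fin N × Fin N) (Fin N × Fin N) ℂ)
    (hΨ₀ : ∀ q q' : Fin N × Fin N, Ψ₀ q q' = ψ₀ q * (starRingEnd ℂ) (ψ₀ q'))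
    (R : Matrix (Fin N × Fin N) (Fin N × Fin N) ℂ)
    (hR : R.PosDef) (hRtr : R.trace = 1)
    (hcorr : ∑ k : Fin P, ∑ l : Fin P, Λ k l * R * (Λ k l)ᴴ = Ψ₀) :
    False :=
  classical_communication_necessary_general N P hN μ hμsum A B hA2 hB2 Λ hΛ ψ₀ hψ₀ Ψ₀ hΨ₀ R hR hcorr
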